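/- Let (X,d) be a finite metric space with |X| ≥ 3. Then the trimming relation ℜ, defined by x ℜ y iff x = y or d(x,y) = d̲(x) + d̲(y), is an equivalence relation on X; in particular it is transitive: if d(x,y) = d̲(x)+d̲(y) and d(y,z) = d̲(y)+d̲(z) for pairwise distinct x,y,z, then d(x,z) = d̲(x)+d̲(z). -/
import Mathlib


/-- The pendant length of a point `x` of a (finite) metric space: the infimum of the
Gromov products `(d(x,y) + d(x,z) − d(y,z))/2` over distinct pairs `y, z` distinct
from `x`. -/
noncomputable def pend {α : Type*} [MetricSpace α] (x : α) : ℝ :=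
  sInf {g : ℝ | ∃ y z : α, y ≠ x ∧ z ≠ x ∧ y ≠ z ∧
    g = (dist x y + dist x z - dist y z) / 2}

lemma pend_bddBelow {α : Type*} [MetricSpace α] (x : α) :
    BddBelow {g : ℝ | ∃ y z : α, y ≠ x ∧ z ≠ x ∧ y ≠ z ∧
      g = (dist x y + dist x z - dist y z) / 2} := by
  refine ⟨0, fun g hg => ?_⟩
  obtain ⟨y, z, _, _, _, rfl⟩ := hg
  have h := dist_triangle y x z
  rw [dist_comm y x] at h
  linarith

lemma pend_le {α : Type*} [MetricSpace α] {x y z : α}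
    (hy : y ≠ x) (hz : z ≠ x) (hyz : y ≠ z) :
    pend x ≤ (dist x y + dist x z - dist y z) / 2 :=
  csInf_le (pend_bddBelow x) ⟨y, z, hy, hz, hyz, rfl⟩

lemma exists_third {α : Type*} [Fintype α] (hcard : 3 ≤ Fintype.card α) (x y : α) :
    ∃ z : α, z ≠ x ∧ z ≠ y := by
  classical
  by_contra h
  push_neg at h
  have hsub : (Finset.univ : Finset α) ⊆ {x, y} := by
    intro z _
    simp only [Finset.mem_insert, Finset.mem_singleton]
    rcases eq_or_ne z x with h1 | h1
    · exact Or.inl h1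
    · exact Or.inr (h z h1)
  have h1 : Fintype.card α ≤ ({x, y} : Finset α).card := by
    simpa [Finset.card_univ] using Finset.card_le_card hsub
  have h2 : ({x, y} : Finset α).card ≤ 2 :=
    (Finset.card_insert_le _ _).trans (by simp)
  omega

lemma pend_add_pend_le {α : Type*} [MetricSpace α] [Fintype α]
    (hcard : 3 ≤ Fintype.card α) {x y : α} (hxy : x ≠ y) :
    pend x + pend y ≤ dist x y := by
  obtain ⟨z, hzx, hzy⟩ := exists_third hcard x y
  have h1 : pend x ≤ (dist x y + dist x z - dist y z) / 2 :=
    pend_le hxy.symm hzx hzy.symm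
  have h2 : pend y ≤ (dist y x + dist y z - dist x z) / 2 :=
    pend_le hxy hzy hzx.symm
  have e1 : dist y x = dist x y := dist_comm y x
  have e2 : dist y z = dist z y := dist_comm y z
  have e3 : dist x z = dist z x := dist_comm x z
  linarith

lemma trimming_trans {α : Type*} [MetricSpace α] [Fintype α]
    (hcard : 3 ≤ Fintype.card α) {x y z : α} (hxy : x ≠ y) (hyz : y ≠ z) (hxz : x ≠ z)
    (h1 : dist x y = pend x + pend y) (h2 : dist y z = pend y + pend z) :
    dist x z = pend x + pend z := by
  have hle : pend x + pend z ≤ dist x z := pend_add_pend_le hcard hxz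
  have hy : pend y ≤ (dist y x + dist y z - dist x z) / 2 :=
    pend_le hxy hyz.symm hxz
  have e1 : dist y x = dist x y := dist_comm y x
  linarith

/-- The trimming relation `x ℜ y ↔ x = y ∨ d(x,y) = d̲(x) + d̲(y)` on a finite metric
space with at least three points is an equivalence relation; in particular it is
transitive. -/
theorem trimming_relation_equivalence {α : Type*} [MetricSpace α] [Fintype α]
    (hcard : 3 ≤ Fintype.card α) :
    Equivalence (fun x y : α => x = y ∨ dist x y = pend x + pend y) ∧
    (∀ x y z : α, x ≠ y → y ≠ z → x ≠ z →
      dist x y = pend x + pend y → dist y z = pend y + pend z →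
      dist x z = pend x + pend z) := by
  have trans : ∀ x y z : α, x ≠ y → y ≠ z → x ≠ z →
      dist x y = pend x + pend y → dist y z = pend y + pend z →
      dist x z = pend x + pend z := fun x y z hxy hyz hxz h1 h2 =>
    trimming_trans hcard hxy hyz hxz h1 h2
  refine ⟨⟨fun x => Or.inl rfl, ?_, ?_⟩, trans⟩
  · rintro x y (rfl | h)
    · exact Or.inl rfl
    · exact Or.inr (by rw [dist_comm]; linarith)
  · rintro x y z (rfl | h1) h2
    · exact h2
    · rcases h2 with rfl | h2
      · exact Or.inr h1
      · rcases eq_or_ne x z with rfl | hxz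
        · exact Or.inl rfl
        · rcases eq_or_ne x y with rfl | hxy
          · exact Or.inr h2
          · rcases eq_or_ne y z with rfl | hyz
            · exact Or.inr h1
            · exact Or.inr (trans x y z hxy hyz hxz h1 h2)
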